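/- arXiv:math/0701552 — 7 statements merged into one kernel-verified Lean document; each statement's English description precedes it below -/
import Mathlib

section
/- For 1-dimensional σ-labelled precubical sets K, L, M, the synchronized product is associative up to natural isomorphism: K ×_σ (L ×_σ M) ≅ (K ×_σ L) ×_σ M. -/
inductive SyncElt (Lbl : Type*) where
  | bot : SyncElt Lbl
  | zero : SyncElt Lbl
  | act : Lbl → SyncElt Lbl

structure SyncAlgebra (Lbl : Type*) where
  op : SyncElt Lbl → SyncElt Lbl → SyncElt Lbl
  comm : ∀ x y, op x y = op y x
  assoc : ∀ x y z, op (op x y) z = op x (op y z)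
  op_bot : ∀ x, x ≠ SyncElt.zero → op x SyncElt.bot = SyncElt.bot
  op_eq_zero_iff : ∀ x y, op x y = SyncElt.zero ↔ x = SyncElt.zero ∧ y = SyncElt.zero
  act_zero : ∀ a : Lbl, op (SyncElt.act a) SyncElt.zero = SyncElt.act a ∨
    op (SyncElt.act a) SyncElt.zero = SyncElt.bot

/-- A 1-dimensional `σ`-labelled precubical set: a set `V` of `0`-cubes (states),
a set `E` of `1`-cubes with source `s`, target `t`, and a labelling map to
`!^σΣ` in dimension `1`, i.e. every `1`-cube is labelled by an action `a ∈ Σ`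
(`lab_act`) which may run asynchronously (`lab_ok`: `σ(a,0) = a`). -/
structure LPC1 (Lbl : Type*) (S : SyncAlgebra Lbl) where
  V : Type*
  E : Type*
  s : E → V
  t : E → V
  lab : E → SyncElt Lbl
  lab_act : ∀ e, ∃ a : Lbl, lab e = SyncElt.act a
  lab_ok : ∀ e, S.op (lab e) SyncElt.zero = lab e

/-- The synchronized product `K ×_σ L` of two 1-dimensional `σ`-labelled
precubical sets: `(K ×_σ L)₀ = K₀ × L₀` and
`(K ×_σ L)₁ = (K₁ × L₀) ⊔ (K₀ × L₁) ⊔ {(x,y) ∈ K₁ × L₁ | σ(ℓx, ℓy) ≠ ⊥}`,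
with face maps applied componentwise (diagonally for synchronized pairs) and
labels `ℓ(x,y) = ℓ(x)`, `ℓ(y)`, or `σ(ℓx, ℓy)` respectively. -/
def prodSync {Lbl : Type*} (S : SyncAlgebra Lbl) (K L : LPC1 Lbl S) : LPC1 Lbl S where
  V := K.V × L.V
  E := (K.E × L.V) ⊕ (K.V × L.E) ⊕
    {p : K.E × L.E // S.op (K.lab p.1) (L.lab p.2) ≠ SyncElt.bot}
  s := fun e => match e with
    | Sum.inl (x, v) => (K.s x, v)
    | Sum.inr (Sum.inl (v, y)) => (v, L.s y)
    | Sum.inr (Sum.inr ⟨(x, y), _⟩) => (K.s x, L.s y)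
  t := fun e => match e with
    | Sum.inl (x, v) => (K.t x, v)
    | Sum.inr (Sum.inl (v, y)) => (v, L.t y)
    | Sum.inr (Sum.inr ⟨(x, y), _⟩) => (K.t x, L.t y)
  lab := fun e => match e with
    | Sum.inl (x, _) => K.lab x
    | Sum.inr (Sum.inl (_, y)) => L.lab y
    | Sum.inr (Sum.inr ⟨(x, y), _⟩) => S.op (K.lab x) (L.lab y)
  lab_act := by
    rintro (⟨x, v⟩ | ⟨v, y⟩ | ⟨⟨x, y⟩, h⟩)
    · exact K.lab_act x
    · exact L.lab_act y
    · dsimp only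
      rcases hxy : S.op (K.lab x) (L.lab y) with _ | _ | a
      · exact absurd hxy h
      · obtain ⟨a, ha⟩ := K.lab_act x
        have := ((S.op_eq_zero_iff _ _).mp hxy).1
        rw [ha] at this
        exact absurd this (by simp)
      · exact ⟨a, rfl⟩
  lab_ok := by
    rintro (⟨x, v⟩ | ⟨v, y⟩ | ⟨⟨x, y⟩, h⟩)
    · exact K.lab_ok x
    · exact L.lab_ok y
    · dsimp only
      rw [S.assoc, L.lab_ok]

/-- An isomorphism of 1-dimensional `σ`-labelled precubical sets. -/
structure LPC1Iso {Lbl : Type*} {S : SyncAlgebra Lbl} (K L : LPC1 Lbl S) where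
  vEquiv : K.V ≃ L.V
  eEquiv : K.E ≃ L.E
  s_comm : ∀ e, L.s (eEquiv e) = vEquiv (K.s e)
  t_comm : ∀ e, L.t (eEquiv e) = vEquiv (K.t e)
  lab_comm : ∀ e, L.lab (eEquiv e) = K.lab e

lemma lab_ne_zero {Lbl : Type*} {S : SyncAlgebra Lbl} (K : LPC1 Lbl S) (e : K.E) :
    K.lab e ≠ SyncElt.zero := by
  obtain ⟨a, ha⟩ := K.lab_act e
  simp [ha]

lemma left_ne_bot {Lbl : Type*} {S : SyncAlgebra Lbl} {K L M : LPC1 Lbl S}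
    {x : K.E} {e : L.E} {m : M.E}
    (h : S.op (K.lab x) (S.op (L.lab e) (M.lab m)) ≠ SyncElt.bot) :
    S.op (K.lab x) (L.lab e) ≠ SyncElt.bot := by
  intro hb
  apply h
  rw [← S.assoc, hb, S.comm]
  exact S.op_bot _ (lab_ne_zero M m)

lemma right_ne_bot {Lbl : Type*} {S : SyncAlgebra Lbl} {K L M : LPC1 Lbl S}
    {x : K.E} {e : L.E} {m : M.E}
    (h : S.op (S.op (K.lab x) (L.lab e)) (M.lab m) ≠ SyncElt.bot) :
    S.op (L.lab e) (M.lab m) ≠ SyncElt.bot := by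
  intro hb
  apply h
  rw [S.assoc, hb]
  exact S.op_bot _ (lab_ne_zero K x)

/-- For 1-dimensional `σ`-labelled precubical sets `K`, `L`, `M`, the
synchronized product is associative up to natural isomorphism:
`K ×_σ (L ×_σ M) ≅ (K ×_σ L) ×_σ M`. -/
theorem prodSync_assoc {Lbl : Type*} [Nonempty Lbl] (S : SyncAlgebra Lbl)
    (K L M : LPC1 Lbl S) :
    Nonempty (LPC1Iso (prodSync S K (prodSync S L M)) (prodSync S (prodSync S K L) M)) := by
  refine ⟨⟨(Equiv.prodAssoc K.V L.V M.V).symm, ⟨?_, ?_, ?_, ?_⟩, ?_, ?_, ?_⟩⟩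
  · -- toFun
    rintro (⟨x, v, w⟩ | ⟨u, (⟨e, w⟩ | ⟨v, m⟩ | ⟨⟨e, m⟩, h⟩)⟩ |
      ⟨⟨x, (⟨e, w⟩ | ⟨v, m⟩ | ⟨⟨e, m⟩, h2⟩)⟩, h⟩)
    · exact Sum.inl (Sum.inl (x, v), w)
    · exact Sum.inl (Sum.inr (Sum.inl (u, e)), w)
    · exact Sum.inr (Sum.inl ((u, v), m))
    · exact Sum.inr (Sum.inr ⟨(Sum.inr (Sum.inl (u, e)), m), h⟩)
    · exact Sum.inl (Sum.inr (Sum.inr ⟨(x, e), h⟩), w)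
    · exact Sum.inr (Sum.inr ⟨(Sum.inl (x, v), m), h⟩)
    · exact Sum.inr (Sum.inr ⟨(Sum.inr (Sum.inr ⟨(x, e), left_ne_bot h⟩), m),
        by dsimp only [prodSync]; rw [S.assoc]; exact h⟩)
  · -- invFun
    rintro (⟨(⟨x, v⟩ | ⟨u, e⟩ | ⟨⟨x, e⟩, h⟩), w⟩ | ⟨⟨u, v⟩, m⟩ |
      ⟨⟨(⟨x, v⟩ | ⟨u, e⟩ | ⟨⟨x, e⟩, h2⟩), m⟩, h⟩)
    · exact Sum.inl (x, v, w)
    · exact Sum.inr (Sum.inl (u, Sum.inl (e, w)))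
    · exact Sum.inr (Sum.inr ⟨(x, Sum.inl (e, w)), h⟩)
    · exact Sum.inr (Sum.inl (u, Sum.inr (Sum.inl (v, m))))
    · exact Sum.inr (Sum.inr ⟨(x, Sum.inr (Sum.inl (v, m))), h⟩)
    · exact Sum.inr (Sum.inl (u, Sum.inr (Sum.inr ⟨(e, m), h⟩)))
    · exact Sum.inr (Sum.inr ⟨(x, Sum.inr (Sum.inr ⟨(e, m), right_ne_bot h⟩)),
        by dsimp only [prodSync]; rw [← S.assoc]; exact h⟩)
  · -- left_inv
    rintro (⟨x, v, w⟩ | ⟨u, (⟨e, w⟩ | ⟨v, m⟩ | ⟨⟨e, m⟩, h⟩)⟩ |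
      ⟨⟨x, (⟨e, w⟩ | ⟨v, m⟩ | ⟨⟨e, m⟩, h2⟩)⟩, h⟩) <;> rfl
  · -- right_inv
    rintro (⟨(⟨x, v⟩ | ⟨u, e⟩ | ⟨⟨x, e⟩, h⟩), w⟩ | ⟨⟨u, v⟩, m⟩ |
      ⟨⟨(⟨x, v⟩ | ⟨u, e⟩ | ⟨⟨x, e⟩, h2⟩), m⟩, h⟩) <;> rfl
  · -- s_comm
    rintro (⟨x, v, w⟩ | ⟨u, (⟨e, w⟩ | ⟨v, m⟩ | ⟨⟨e, m⟩, h⟩)⟩ |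
      ⟨⟨x, (⟨e, w⟩ | ⟨v, m⟩ | ⟨⟨e, m⟩, h2⟩)⟩, h⟩) <;> rfl
  · -- t_comm
    rintro (⟨x, v, w⟩ | ⟨u, (⟨e, w⟩ | ⟨v, m⟩ | ⟨⟨e, m⟩, h⟩)⟩ |
      ⟨⟨x, (⟨e, w⟩ | ⟨v, m⟩ | ⟨⟨e, m⟩, h2⟩)⟩, h⟩) <;> rfl
  · -- lab_comm
    rintro (⟨x, v, w⟩ | ⟨u, (⟨e, w⟩ | ⟨v, m⟩ | ⟨⟨e, m⟩, h⟩)⟩ |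
      ⟨⟨x, (⟨e, w⟩ | ⟨v, m⟩ | ⟨⟨e, m⟩, h2⟩)⟩, h⟩)
    all_goals first | rfl | exact S.assoc _ _ _
end

section
/- For a factorization of a set map x₀ : [n+1] → [p] as x₀ = ψ ∘ φ, where ψ : [q] → [p] is a morphism of the cube category and φ(ε₁,…,ε_{n+1}) = (ε_{i₁},…,ε_{i_q}) with {1,…,n+1} ⊆ {i₁,…,i_q} and the first occurrence of εᵢ preceding the first occurrence of ε_{i+1} (reading left to right), the factorization (ψ, φ) is unique if it exists. -/
/-- The predicate on set maps `{0,1}ᵖ → {0,1}^q` of being a morphism of the cube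
category `□`, i.e. a (possibly empty) composite of coface maps
`δᵢᵅ = Fin.insertNth i α`. -/
inductive IsCubeMap : ∀ {p q : ℕ}, ((Fin p → Bool) → (Fin q → Bool)) → Prop
  | id {n : ℕ} : IsCubeMap (id : (Fin n → Bool) → (Fin n → Bool))
  | comp_delta {p q : ℕ} (f : (Fin p → Bool) → (Fin q → Bool)) (i : Fin (q + 1)) (α : Bool)
      (hf : IsCubeMap f) : IsCubeMap (fun ε => Fin.insertNth i α (f ε))

/-- The position of the first occurrence of the value `v` in the list
`idx 0, idx 1, …` (reading from the left to the right). -/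
noncomputable def firstOcc {q m : ℕ} (idx : Fin q → Fin m) (v : Fin m) : ℕ :=
  sInf {k : ℕ | ∃ h : k < q, idx ⟨k, h⟩ = v}

/-- `(idx, ψ)` is a non-twisted factorization of the set map
`x : [n+1] → [p]`: `x = ψ ∘ φ` where `ψ : [q] → [p]` is a morphism of the
cube category, `φ(ε₁,…,ε_{n+1}) = (ε_{i₁},…,ε_{i_q})` (i.e.
`φ(ε) k = ε (idx k)`) with `{1,…,n+1} ⊆ {i₁,…,i_q}` (surjectivity of `idx`)
and the first occurrence of `εᵢ` preceding the first occurrence of `ε_{i+1}`,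
reading from the left to the right. -/
def NonTwistedFactor {n p q : ℕ} (x : (Fin (n + 1) → Bool) → (Fin p → Bool))
    (idx : Fin q → Fin (n + 1)) (ψ : (Fin q → Bool) → (Fin p → Bool)) : Prop :=
  IsCubeMap ψ ∧ Function.Surjective idx ∧
    (∀ i : Fin n, firstOcc idx i.castSucc < firstOcc idx i.succ) ∧
    x = fun ε => ψ (fun k => ε (idx k))

/-- A set map `x : [n+1] → [p]` is non-twisted if it admits a non-twisted
factorization. -/
def NonTwisted {n p : ℕ} (x : (Fin (n + 1) → Bool) → (Fin p → Bool)) : Prop :=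
  ∃ (q : ℕ) (idx : Fin q → Fin (n + 1)) (ψ : (Fin q → Bool) → (Fin p → Bool)),
    NonTwistedFactor x idx ψ

/-- Structure theorem for cube maps: each output coordinate is either a
projection onto an input coordinate or a constant; the projection coordinates
are strictly increasing and every input coordinate is used. -/
private lemma cube_struct {p q : ℕ} {ψ : (Fin q → Bool) → (Fin p → Bool)} (hψ : IsCubeMap ψ) :
    ∃ g : Fin p → Option (Fin q),
      (∀ j k, g j = some k → ∀ ε, ψ ε j = ε k) ∧
      (∀ j, g j = none → ∀ ε ε', ψ ε j = ψ ε' j) ∧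
      (∀ j j' k k', j < j' → g j = some k → g j' = some k' → k < k') ∧
      (∀ k, ∃ j, g j = some k) := by
  induction hψ with
  | id =>
    refine ⟨fun j => some j, ?_, ?_, ?_, fun k => ⟨k, rfl⟩⟩
    · intro j k hj ε; cases Option.some.inj hj; rfl
    · intro j hj; simp at hj
    · intro j j' k k' h hj hj'
      cases Option.some.inj hj; cases Option.some.inj hj'; exact h
  | comp_delta f i α hf ih =>
    obtain ⟨g, h1, h2, h3, h4⟩ := ih
    refine ⟨Fin.insertNth i none g, ?_, ?_, ?_, ?_⟩
    · intro j k hj ε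
      rcases eq_or_ne j i with rfl | hji
      · rw [Fin.insertNth_apply_same] at hj; simp at hj
      · obtain ⟨j', rfl⟩ := Fin.exists_succAbove_eq hji
        rw [Fin.insertNth_apply_succAbove] at hj
        simp only [Fin.insertNth_apply_succAbove]
        exact h1 j' k hj ε
    · intro j hj ε ε'
      rcases eq_or_ne j i with rfl | hji
      · simp only [Fin.insertNth_apply_same]
      · obtain ⟨j', rfl⟩ := Fin.exists_succAbove_eq hji
        rw [Fin.insertNth_apply_succAbove] at hj
        simp only [Fin.insertNth_apply_succAbove]
        exact h2 j' hj ε ε'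
    · intro j j' k k' hlt hj hj'
      rcases eq_or_ne j i with rfl | hji
      · rw [Fin.insertNth_apply_same] at hj; simp at hj
      rcases eq_or_ne j' i with rfl | hji'
      · rw [Fin.insertNth_apply_same] at hj'; simp at hj'
      obtain ⟨a, rfl⟩ := Fin.exists_succAbove_eq hji
      obtain ⟨b, rfl⟩ := Fin.exists_succAbove_eq hji'
      rw [Fin.insertNth_apply_succAbove] at hj hj'
      exact h3 a b k k' (Fin.succAbove_lt_succAbove_iff.mp hlt) hj hj'
    · intro k
      obtain ⟨j, hj⟩ := h4 k
      exact ⟨i.succAbove j, by rwa [Fin.insertNth_apply_succAbove]⟩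

/-- The non-twisted factorization `x₀ = ψ ∘ φ` of a set map
`x₀ : [n+1] → [p]` (with `ψ` a morphism of the cube category and `φ` a
coordinate-duplicating map respecting the order of first occurrences) is
unique if it exists. -/
theorem nonTwistedFactor_unique {n p : ℕ}
    (x : (Fin (n + 1) → Bool) → (Fin p → Bool)) {q₁ q₂ : ℕ}
    (idx₁ : Fin q₁ → Fin (n + 1)) (ψ₁ : (Fin q₁ → Bool) → (Fin p → Bool))
    (idx₂ : Fin q₂ → Fin (n + 1)) (ψ₂ : (Fin q₂ → Bool) → (Fin p → Bool))
    (h₁ : NonTwistedFactor x idx₁ ψ₁) (h₂ : NonTwistedFactor x idx₂ ψ₂) :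
    q₁ = q₂ ∧ HEq idx₁ idx₂ ∧ HEq ψ₁ ψ₂ := by
  obtain ⟨hc₁, -, -, hxe₁⟩ := h₁
  obtain ⟨hc₂, -, -, hxe₂⟩ := h₂
  obtain ⟨g₁, p11, p12, p13, p14⟩ := cube_struct hc₁
  obtain ⟨g₂, p21, p22, p23, p24⟩ := cube_struct hc₂
  have hx1 : ∀ ε j, x ε j = ψ₁ (fun k => ε (idx₁ k)) j := by intro ε j; rw [hxe₁]
  have hx2 : ∀ ε j, x ε j = ψ₂ (fun k => ε (idx₂ k)) j := by intro ε j; rw [hxe₂]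
  -- a coordinate is a projection for `g₁` iff it is one for `g₂`
  have key : ∀ j, (g₁ j).isSome ↔ (g₂ j).isSome := by
    intro j
    constructor
    · intro h
      obtain ⟨k, hk⟩ := Option.isSome_iff_exists.mp h
      by_contra h2
      have hn : g₂ j = none := Option.not_isSome_iff_eq_none.mp h2
      have e1 : x (fun _ => true) j = true := by rw [hx1]; exact p11 j k hk _
      have e2 : x (fun _ => false) j = false := by rw [hx1]; exact p11 j k hk _
      have e3 : x (fun _ => true) j = x (fun _ => false) j := by
        rw [hx2, hx2]; exact p22 j hn _ _
      rw [e1, e2] at e3; exact Bool.true_eq_false_eq_False e3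
    · intro h
      obtain ⟨k, hk⟩ := Option.isSome_iff_exists.mp h
      by_contra h2
      have hn : g₁ j = none := Option.not_isSome_iff_eq_none.mp h2
      have e1 : x (fun _ => true) j = true := by rw [hx2]; exact p21 j k hk _
      have e2 : x (fun _ => false) j = false := by rw [hx2]; exact p21 j k hk _
      have e3 : x (fun _ => true) j = x (fun _ => false) j := by
        rw [hx1, hx1]; exact p12 j hn _ _
      rw [e1, e2] at e3; exact Bool.true_eq_false_eq_False e3
  -- cardinality: both q's equal the number of projection coordinates
  have card1 : Fintype.card {j : Fin p // (g₁ j).isSome} = q₁ := by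
    have hb : Function.Bijective (fun j : {j : Fin p // (g₁ j).isSome} =>
        (g₁ j.1).get j.2) := by
      constructor
      · rintro ⟨a, ha⟩ ⟨b, hb'⟩ hab
        rcases lt_trichotomy a b with h | h | h
        · have := p13 a b _ _ h (Option.some_get ha).symm (Option.some_get hb').symm
          simp only at hab
          rw [hab] at this; exact absurd this (lt_irrefl _)
        · exact Subtype.ext h
        · have := p13 b a _ _ h (Option.some_get hb').symm (Option.some_get ha).symm
          simp only at hab
          rw [hab] at this; exact absurd this (lt_irrefl _)
      · intro k
        obtain ⟨j, hj⟩ := p14 k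
        exact ⟨⟨j, by simp [hj]⟩, by simp [hj]⟩
    rw [Fintype.card_of_bijective hb, Fintype.card_fin]
  have card2 : Fintype.card {j : Fin p // (g₂ j).isSome} = q₂ := by
    have hb : Function.Bijective (fun j : {j : Fin p // (g₂ j).isSome} =>
        (g₂ j.1).get j.2) := by
      constructor
      · rintro ⟨a, ha⟩ ⟨b, hb'⟩ hab
        rcases lt_trichotomy a b with h | h | h
        · have := p23 a b _ _ h (Option.some_get ha).symm (Option.some_get hb').symm
          simp only at hab
          rw [hab] at this; exact absurd this (lt_irrefl _)
        · exact Subtype.ext h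
        · have := p23 b a _ _ h (Option.some_get hb').symm (Option.some_get ha).symm
          simp only at hab
          rw [hab] at this; exact absurd this (lt_irrefl _)
      · intro k
        obtain ⟨j, hj⟩ := p24 k
        exact ⟨⟨j, by simp [hj]⟩, by simp [hj]⟩
    rw [Fintype.card_of_bijective hb, Fintype.card_fin]
  have hq : q₁ = q₂ := by
    rw [← card1, ← card2]
    exact Fintype.card_congr (Equiv.subtypeEquivRight key)
  subst hq
  -- the enumerations of projection coordinates coincide
  have F₁ : Fin q₁ → Fin p := fun k => (p14 k).choose
  have hF₁ : ∀ k, g₁ ((p14 k).choose) = some k := fun k => (p14 k).choose_spec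
  have hF₂ : ∀ k, g₂ ((p24 k).choose) = some k := fun k => (p24 k).choose_spec
  have uniq₁ : ∀ k j, g₁ j = some k → j = (p14 k).choose := by
    intro k j hj
    rcases lt_trichotomy j ((p14 k).choose) with h | h | h
    · exact absurd (p13 _ _ _ _ h hj (hF₁ k)) (lt_irrefl _)
    · exact h
    · exact absurd (p13 _ _ _ _ h (hF₁ k) hj) (lt_irrefl _)
  have uniq₂ : ∀ k j, g₂ j = some k → j = (p24 k).choose := by
    intro k j hj
    rcases lt_trichotomy j ((p24 k).choose) with h | h | h
    · exact absurd (p23 _ _ _ _ h hj (hF₂ k)) (lt_irrefl _)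
    · exact h
    · exact absurd (p23 _ _ _ _ h (hF₂ k) hj) (lt_irrefl _)
  have mono₁ : StrictMono (fun k => (p14 k).choose) := by
    intro a b hab
    rcases lt_trichotomy ((p14 a).choose) ((p14 b).choose) with h | h | h
    · exact h
    · exfalso
      have : g₁ ((p14 b).choose) = some a := h ▸ hF₁ a
      rw [hF₁ b] at this
      exact absurd (Option.some.inj this) hab.ne'
    · exact absurd (p13 _ _ _ _ h (hF₁ b) (hF₁ a)) (asymm hab)
  have mono₂ : StrictMono (fun k => (p24 k).choose) := by
    intro a b hab
    rcases lt_trichotomy ((p24 a).choose) ((p24 b).choose) with h | h | h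
    · exact h
    · exfalso
      have : g₂ ((p24 b).choose) = some a := h ▸ hF₂ a
      rw [hF₂ b] at this
      exact absurd (Option.some.inj this) hab.ne'
    · exact absurd (p23 _ _ _ _ h (hF₂ b) (hF₂ a)) (asymm hab)
  have hrange : Set.range (fun k => (p14 k).choose) = Set.range (fun k => (p24 k).choose) := by
    ext j
    constructor
    · rintro ⟨k, rfl⟩
      have hs : (g₂ ((p14 k).choose)).isSome := (key _).mp (by rw [hF₁ k]; rfl)
      obtain ⟨k', hk'⟩ := Option.isSome_iff_exists.mp hs
      exact ⟨k', (uniq₂ k' _ hk').symm⟩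
    · rintro ⟨k, rfl⟩
      have hs : (g₁ ((p24 k).choose)).isSome := (key _).mpr (by rw [hF₂ k]; rfl)
      obtain ⟨k', hk'⟩ := Option.isSome_iff_exists.mp hs
      exact ⟨k', (uniq₁ k' _ hk').symm⟩
  have hFF : (fun k => (p14 k).choose) = (fun k => (p24 k).choose) := by
    have hwf : WellFoundedLT (Fin q₁) := inferInstance
    exact (mono₁.range_inj mono₂).mp hrange
  have hg : ∀ j, g₁ j = g₂ j := by
    intro j
    cases hj : g₁ j with
    | none =>
      have h2 : ¬ (g₂ j).isSome := by
        intro h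
        have := (key j).mpr h
        rw [hj] at this
        simp at this
      rw [Option.not_isSome_iff_eq_none.mp h2]
    | some k =>
      have hj1 : j = (p14 k).choose := uniq₁ k j hj
      have hj2 : j = (p24 k).choose := by rw [hj1, congrFun hFF k]
      rw [hj2]; exact (hF₂ k).symm
  refine ⟨rfl, heq_of_eq ?_, heq_of_eq ?_⟩
  · funext k
    have hg2 : g₂ ((p14 k).choose) = some k := by rw [← hg]; exact hF₁ k
    have e : ∀ ε : Fin (n + 1) → Bool, ε (idx₁ k) = ε (idx₂ k) := by
      intro ε
      have a1 : x ε ((p14 k).choose) = ε (idx₁ k) := by rw [hx1]; exact p11 _ _ (hF₁ k) _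
      have a2 : x ε ((p14 k).choose) = ε (idx₂ k) := by rw [hx2]; exact p21 _ _ hg2 _
      rw [← a1, a2]
    have := e (fun t => decide (t = idx₁ k))
    simp at this
    exact this.symm
  · funext ε j
    cases hj : g₁ j with
    | some k =>
      have hg2 : g₂ j = some k := by rw [← hg]; exact hj
      rw [p11 j k hj ε, p21 j k hg2 ε]
    | none =>
      have hn2 : g₂ j = none := by rw [← hg]; exact hj
      calc ψ₁ ε j = ψ₁ (fun k => (fun _ : Fin (n + 1) => false) (idx₁ k)) j := p12 j hj _ _
        _ = x (fun _ => false) j := (hx1 (fun _ => false) j).symm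
        _ = ψ₂ (fun k => (fun _ : Fin (n + 1) => false) (idx₂ k)) j := hx2 _ _
        _ = ψ₂ ε j := p22 j hn2 _ _
end

section
/- Every non-twisted set map x₀ : [n+1] → [p] is injective. -/
theorem isCubeMap_injective {p q : ℕ} {f : (Fin p → Bool) → (Fin q → Bool)}
    (h : IsCubeMap f) : Function.Injective f := by
  induction h with
  | id => exact fun a b hab => hab
  | comp_delta f i α hf ih =>
    intro a b hab
    apply ih
    funext j
    have := congrFun hab (i.succAbove j)
    simpa [Fin.insertNth_apply_succAbove] using this

/-- Every non-twisted set map `x₀ : [n+1] → [p]` is injective. -/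
theorem nonTwisted_injective {n p : ℕ}
    (x : (Fin (n + 1) → Bool) → (Fin p → Bool)) (h : NonTwisted x) :
    Function.Injective x := by
  obtain ⟨q, idx, ψ, hψ, hsurj, -, rfl⟩ := h
  intro a b hab
  funext i
  obtain ⟨k, rfl⟩ := hsurj i
  exact congrFun (isCubeMap_injective hψ hab) k
end

section
/- For the trivial synchronization algebra ⊥ (where no two labelled actions synchronize and every action may run asynchronously), there is an isomorphism of 1-dimensional labelled precubical sets □[p]_{≤1} ×_⊥ □[q]_{≤1} ≅ □[p+q]_{≤1}. -/
/-- The trivial synchronization algebra `⊥`: `σ(a,b) = ⊥` for all labels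
`a, b ∈ Σ` (no two actions synchronize) and `σ(a,0) = a` (every action may
run asynchronously). -/
def trivialSync (Lbl : Type*) : SyncAlgebra Lbl where
  op := fun x y => match x, y with
    | SyncElt.zero, SyncElt.zero => SyncElt.zero
    | SyncElt.zero, SyncElt.act a => SyncElt.act a
    | SyncElt.act a, SyncElt.zero => SyncElt.act a
    | _, _ => SyncElt.bot
  comm := by intro x y; cases x <;> cases y <;> rfl
  assoc := by intro x y z; cases x <;> cases y <;> cases z <;> rfl
  op_bot := by intro x hx; cases x <;> rfl
  op_eq_zero_iff := by intro x y; cases x <;> cases y <;> simp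
  act_zero := fun a => Or.inl rfl

/-- The 1-truncation `□[p]_{≤1}` of the standard labelled `p`-cube with labels
`a : Fin p → Σ`: vertices are `{0,1}ᵖ`, and a `1`-cube is a pair `(i, v)`
where `i` is the coordinate being executed (labelled `a i`) and `v` is the
vertex where it starts (so `v i = false`). -/
def cube1 {Lbl : Type*} (S : SyncAlgebra Lbl) (p : ℕ) (a : Fin p → Lbl)
    (ha : ∀ i, S.op (SyncElt.act (a i)) SyncElt.zero = SyncElt.act (a i)) : LPC1 Lbl S where
  V := Fin p → Bool
  E := {iv : Fin p × (Fin p → Bool) // iv.2 iv.1 = false}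
  s := fun e => e.1.2
  t := fun e => Function.update e.1.2 e.1.1 true
  lab := fun e => SyncElt.act (a e.1.1)
  lab_act := fun e => ⟨a e.1.1, rfl⟩
  lab_ok := fun e => ha e.1.1

/-!
A vertex of `□[p] ×_⊥ □[q]` is a pair of bit vectors, i.e. via `Fin.append` a bit vector of
length `p + q`. As `⊥` forbids every synchronization, an edge of the product moves one coordinate
of one factor, and so corresponds to the edge of `□[p + q]` moving that coordinate among the first
`p` or the last `q`. Appending commutes with `Function.update`, which matches the targets, and
`Fin.append a b` restricts to `a` and `b`, which matches the labels.
-/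

namespace Fin

variable {α : Type*} {m n : ℕ}

theorem castAdd_ne_natAdd (i : Fin m) (j : Fin n) : castAdd n i ≠ natAdd m j := by
  rw [Ne, Fin.ext_iff, val_castAdd, val_natAdd]
  omega

theorem append_inj {xs xs' : Fin m → α} {ys ys' : Fin n → α} :
    append xs ys = append xs' ys' ↔ xs = xs' ∧ ys = ys' := by
  refine ⟨fun h => ?_, by rintro ⟨rfl, rfl⟩; rfl⟩
  simpa using (appendEquiv m n).injective (a₁ := (xs, ys)) (a₂ := (xs', ys')) h

theorem update_append_castAdd (xs : Fin m → α) (ys : Fin n → α) (i : Fin m) (x : α) :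
    Function.update (append xs ys) (castAdd n i) x = append (Function.update xs i x) ys := by
  funext k
  cases k using addCases <;> simp [Function.update_apply, (castAdd_ne_natAdd _ _).symm]

theorem update_append_natAdd (xs : Fin m → α) (ys : Fin n → α) (j : Fin n) (y : α) :
    Function.update (append xs ys) (natAdd m j) y = append xs (Function.update ys j y) := by
  funext k
  cases k using addCases <;> simp [Function.update_apply, castAdd_ne_natAdd]

end Fin

section CubeProduct

open Fin

variable {Lbl : Type*} {S : SyncAlgebra Lbl} {p q : ℕ} {a : Fin p → Lbl} {b : Fin q → Lbl}
  {ha : ∀ i, S.op (.act (a i)) .zero = .act (a i)}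
  {hb : ∀ j, S.op (.act (b j)) .zero = .act (b j)}
  (hab : ∀ k, S.op (.act (append a b k)) .zero = .act (append a b k))

def cube1ProdSyncEdge (hsync : ∀ i j, S.op (.act (a i)) (.act (b j)) = .bot) :
    (prodSync S (cube1 S p a ha) (cube1 S q b hb)).E → (cube1 S (p + q) (append a b) hab).E
  | .inl (⟨(i, v), hv⟩, w) => ⟨(castAdd q i, append v w), (append_left v w i).trans hv⟩
  | .inr (.inl (v, ⟨(j, w), hw⟩)) => ⟨(natAdd p j, append v w), (append_right v w j).trans hw⟩
  | .inr (.inr ⟨(x, y), h⟩) => (h (hsync x.1.1 y.1.1)).elim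

theorem cube1ProdSyncEdge_injective (hsync : ∀ i j, S.op (.act (a i)) (.act (b j)) = .bot) :
    Function.Injective (cube1ProdSyncEdge (ha := ha) (hb := hb) hab hsync) := by
  rintro (⟨⟨⟨i, v⟩, hv⟩, w⟩ | ⟨v, ⟨⟨j, w⟩, hw⟩⟩ | ⟨⟨x, y⟩, h⟩)
    (⟨⟨⟨i', v'⟩, hv'⟩, w'⟩ | ⟨v', ⟨⟨j', w'⟩, hw'⟩⟩ | ⟨⟨x', y'⟩, h'⟩) heq
  all_goals first
    | exact (h (hsync _ _)).elim
    | exact (h' (hsync _ _)).elim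
    | have hval := congrArg Subtype.val heq
      simp only [cube1ProdSyncEdge, Prod.mk.injEq, castAdd_inj, natAdd_inj, castAdd_ne_natAdd,
        (castAdd_ne_natAdd _ _).symm, false_and] at hval <;>
      obtain ⟨rfl, hvw⟩ := hval <;>
      obtain ⟨rfl, rfl⟩ := append_inj.mp hvw <;>
      rfl

theorem cube1ProdSyncEdge_surjective (hsync : ∀ i j, S.op (.act (a i)) (.act (b j)) = .bot) :
    Function.Surjective (cube1ProdSyncEdge (ha := ha) (hb := hb) hab hsync) := by
  rintro ⟨⟨k, u⟩, hk⟩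
  cases k using addCases with
  | left i =>
    exact ⟨.inl (⟨(i, fun i' => u (castAdd q i')), hk⟩, fun j' => u (natAdd p j')),
      Subtype.ext (Prod.ext rfl append_castAdd_natAdd)⟩
  | right j =>
    exact ⟨.inr (.inl (fun i' => u (castAdd q i'), ⟨(j, fun j' => u (natAdd p j')), hk⟩)),
      Subtype.ext (Prod.ext rfl append_castAdd_natAdd)⟩

noncomputable def cube1ProdSyncIso (hsync : ∀ i j, S.op (.act (a i)) (.act (b j)) = .bot) :
    LPC1Iso (prodSync S (cube1 S p a ha) (cube1 S q b hb)) (cube1 S (p + q) (append a b) hab) where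
  vEquiv := appendEquiv p q
  eEquiv := .ofBijective _
    ⟨cube1ProdSyncEdge_injective hab hsync, cube1ProdSyncEdge_surjective hab hsync⟩
  s_comm := by
    rintro (⟨⟨⟨i, v⟩, hv⟩, w⟩ | ⟨v, ⟨⟨j, w⟩, hw⟩⟩ | ⟨⟨x, y⟩, h⟩)
    · rfl
    · rfl
    · exact (h (hsync _ _)).elim
  t_comm := by
    rintro (⟨⟨⟨i, v⟩, hv⟩, w⟩ | ⟨v, ⟨⟨j, w⟩, hw⟩⟩ | ⟨⟨x, y⟩, h⟩)
    · exact update_append_castAdd v w i true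
    · exact update_append_natAdd v w j true
    · exact (h (hsync _ _)).elim
  lab_comm := by
    rintro (⟨⟨⟨i, v⟩, hv⟩, w⟩ | ⟨v, ⟨⟨j, w⟩, hw⟩⟩ | ⟨⟨x, y⟩, h⟩)
    · exact congrArg SyncElt.act (append_left a b i)
    · exact congrArg SyncElt.act (append_right a b j)
    · exact (h (hsync _ _)).elim

end CubeProduct

theorem prodSync_trivial_cube_general {Lbl : Type*} (p q : ℕ)
    (a : Fin p → Lbl) (b : Fin q → Lbl) :
    Nonempty (LPC1Iso
      (prodSync (trivialSync Lbl) (cube1 (trivialSync Lbl) p a (fun _ => rfl))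
        (cube1 (trivialSync Lbl) q b (fun _ => rfl)))
      (cube1 (trivialSync Lbl) (p + q) (Fin.append a b) (fun _ => rfl))) :=
  ⟨cube1ProdSyncIso _ fun _ _ => rfl⟩

/-- For the trivial synchronization algebra `⊥`, the synchronized product of the
1-truncations of two labelled cubes is the 1-truncation of the labelled
`(p+q)`-cube: `□[p]_{≤1} ×_⊥ □[q]_{≤1} ≅ □[p+q]_{≤1}`. -/
theorem prodSync_trivial_cube {Lbl : Type*} [Nonempty Lbl] (p q : ℕ)
    (a : Fin p → Lbl) (b : Fin q → Lbl) :
    Nonempty (LPC1Iso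
      (prodSync (trivialSync Lbl) (cube1 (trivialSync Lbl) p a (fun _ => rfl))
        (cube1 (trivialSync Lbl) q b (fun _ => rfl)))
      (cube1 (trivialSync Lbl) (p + q) (Fin.append a b) (fun _ => rfl))) :=
  prodSync_trivial_cube_general p q a b
end

section
/- For any morphism of flows f : {0̂<1̂}ⁿ → Z from the flow of the poset {0̂<1̂}ⁿ to a flow Z, f is uniquely determined by its restriction to the images of the coface maps, i.e., by the family of morphisms f ∘ |δᵢᵅ| : {0̂<1̂}ⁿ⁻¹ → Z for 1 ≤ i ≤ n, α ∈ {0,1}, provided n ≥ 3. Consequently the inclusion ∂□[n] → □[n] induces an isomorphism of flows |∂□[n]|_bad ≅ |□[n]|_bad for n ≥ 3. -/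
theorem IsCubeMap.comp {p q r : ℕ} {g : (Fin q → Bool) → (Fin r → Bool)}
    {f : (Fin p → Bool) → (Fin q → Bool)} (hg : IsCubeMap g) (hf : IsCubeMap f) :
    IsCubeMap (g ∘ f) := by
  induction hg with
  | id => exact hf
  | comp_delta g' i α hg' ih => exact IsCubeMap.comp_delta (g' ∘ f) i α ih

/-- A flow: a small topological category without identity maps.  `states` is
the set of states, `paths a b` the topological space of (non-constant)
execution paths from `a` to `b`, with a continuous and strictly associative
composition law. -/
structure GFlow where
  states : Type
  paths : states → states → Type
  top : ∀ a b, TopologicalSpace (paths a b)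
  comp : ∀ {a b c}, paths a b → paths b c → paths a c
  comp_assoc : ∀ {a b c d} (x : paths a b) (y : paths b c) (z : paths c d),
    comp (comp x y) z = comp x (comp y z)
  comp_cont : ∀ a b c, @Continuous (paths a b × paths b c) (paths a c)
    (@instTopologicalSpaceProd _ _ (top a b) (top b c)) (top a c)
    (fun xy => comp xy.1 xy.2)

/-- A morphism of flows: a set map on states together with continuous maps on
path spaces, compatible with the composition. -/
structure FlowHom (X Y : GFlow) where
  f0 : X.states → Y.states
  fP : ∀ {a b}, X.paths a b → Y.paths (f0 a) (f0 b)
  fP_cont : ∀ a b, @Continuous (X.paths a b) (Y.paths (f0 a) (f0 b))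
    (X.top a b) (Y.top (f0 a) (f0 b)) (fun x => fP x)
  fP_comp : ∀ {a b c} (x : X.paths a b) (y : X.paths b c),
    fP (X.comp x y) = Y.comp (fP x) (fP y)

/-- Composition of morphisms of flows (`f` first, then `g`). -/
def FlowHom.comp {X Y Z : GFlow} (f : FlowHom X Y) (g : FlowHom Y Z) : FlowHom X Z where
  f0 := fun a => g.f0 (f.f0 a)
  fP := fun x => g.fP (f.fP x)
  fP_cont := fun a b =>
    @Continuous.comp _ _ _ (X.top a b) (Y.top (f.f0 a) (f.f0 b))
      (Z.top (g.f0 (f.f0 a)) (g.f0 (f.f0 b))) _ _ (g.fP_cont _ _) (f.fP_cont a b)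
  fP_comp := fun x y => by
    show g.fP (f.fP (X.comp x y)) = Z.comp (g.fP (f.fP x)) (g.fP (f.fP y))
    rw [f.fP_comp, g.fP_comp]

/-- The flow associated with the poset `{0̂ < 1̂}ⁿ` (the product order on
`{0,1}ⁿ`): there is exactly one execution path from `a` to `b` whenever
`a < b`, and the path spaces are discrete. -/
def cubeFlow (n : ℕ) : GFlow where
  states := Fin n → Bool
  paths a b := PLift (a < b)
  top _ _ := ⊥
  comp x y := PLift.up (lt_trans x.down y.down)
  comp_assoc := by intros; rfl
  comp_cont := by
    intro a b c
    letI : TopologicalSpace (PLift (a < b)) := ⊥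
    letI : TopologicalSpace (PLift (b < c)) := ⊥
    letI : TopologicalSpace (PLift (a < c)) := ⊥
    haveI : DiscreteTopology (PLift (a < b)) := ⟨rfl⟩
    haveI : DiscreteTopology (PLift (b < c)) := ⟨rfl⟩
    exact continuous_of_discreteTopology

/-- Every morphism of the cube category is strictly monotone. -/
theorem IsCubeMap.strictMono {p q : ℕ} {f : (Fin p → Bool) → (Fin q → Bool)}
    (hf : IsCubeMap f) : StrictMono f := by
  induction hf with
  | id => exact strictMono_id
  | comp_delta g i α hg ih =>
      intro a b hab
      have h1 : Fin.insertNth (α := fun _ => Bool) i α (g a) ≤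
          Fin.insertNth (α := fun _ => Bool) i α (g b) := by
        rw [Fin.insertNth_le_iff]
        constructor
        · simp
        · intro j
          simpa using (ih hab).le j
      refine lt_of_le_of_ne h1 ?_
      intro heq
      have := congr_fun heq
      apply (ih hab).ne
      funext j
      simpa [Fin.insertNth_apply_succAbove] using this (i.succAbove j)

/-- The morphism of flows `{0̂<1̂}ᵖ → {0̂<1̂}^q` induced by a morphism of the
cube category. -/
def cubeFlowHom {p q : ℕ} (f : (Fin p → Bool) → (Fin q → Bool)) (hf : IsCubeMap f) :
    FlowHom (cubeFlow p) (cubeFlow q) where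
  f0 := f
  fP := fun {a b} x => ⟨hf.strictMono x.down⟩
  fP_cont := fun a b => continuous_bot
  fP_comp := fun x y => rfl

/-- The morphism of flows `|δᵢᵅ| : {0̂<1̂}ⁿ → {0̂<1̂}ⁿ⁺¹` induced by the coface
map `δᵢᵅ`. -/
def cofaceFlow {n : ℕ} (i : Fin (n + 1)) (α : Bool) :
    FlowHom (cubeFlow n) (cubeFlow (n + 1)) :=
  cubeFlowHom (fun ε => Fin.insertNth i α ε)
    (IsCubeMap.comp_delta id i α IsCubeMap.id)

theorem IsCubeMap.insertNth {n : ℕ} (i : Fin (n + 1)) (α : Bool) :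
    IsCubeMap (Fin.insertNth (α := fun _ => Bool) i α) :=
  (comp_delta _root_.id i α id : IsCubeMap fun ε => Fin.insertNth i α (_root_.id ε))

theorem IsCubeMap.const {q : ℕ} (a : Fin q → Bool) : IsCubeMap fun _ : Fin 0 → Bool => a := by
  induction q with
  | zero => convert IsCubeMap.id (n := 0) using 1
  | succ q ih =>
    rw [← Fin.insertNth_self_removeNth 0 a]
    exact comp_delta _ 0 (a 0) (ih _)

namespace Fin

variable {n : ℕ} {α : Type*}

theorem insertNth_insertNth_swap (i : Fin (n + 2)) (j : Fin (n + 1)) (x y : α) (p : Fin n → α) :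
    insertNth (α := fun _ => α) i x (insertNth (α := fun _ => α) j y p) =
      insertNth (α := fun _ => α) (i.succAbove j) y
        (insertNth (α := fun _ => α) (j.predAbove i) x p) := by
  symm
  rw [insertNth_eq_iff, insertNth_eq_iff, removeNth_apply, succAbove_succAbove_predAbove,
    ← removeNth_removeNth_eq_swap, removeNth_insertNth, removeNth_insertNth,
    insertNth_apply_succAbove, insertNth_apply_same, insertNth_apply_same]
  exact ⟨rfl, rfl, rfl⟩

theorem removeNth_lt_removeNth [Preorder α] {a b : Fin (n + 1) → α}
    (hab : a < b) (i : Fin (n + 1)) (hi : a i = b i) : removeNth i a < removeNth i b := by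
  refine ⟨fun j => hab.le _, fun hba => hab.not_ge ?_⟩
  rw [← insertNth_self_removeNth i b, insertNth_le_iff]
  exact ⟨hi.ge, hba⟩

end Fin

section BoolCube

variable {ι : Type*}

theorem exists_apply_eq_or_eq_bot_and_eq_top {a b : ι → Bool} (hab : a ≤ b) :
    (∃ i, a i = b i) ∨ a = ⊥ ∧ b = ⊤ := by
  refine or_iff_not_imp_left.2 fun hne => ?_
  have hlt (i : ι) : a i < b i := (hab i).lt_of_ne fun h => hne ⟨i, h⟩
  exact ⟨funext fun i => (Bool.lt_iff.1 (hlt i)).1, funext fun i => (Bool.lt_iff.1 (hlt i)).2⟩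

theorem exists_bot_apply_eq_of_lt_top {m : ι → Bool} (hm : m < ⊤) :
    ∃ i, (⊥ : ι → Bool) i = m i :=
  (exists_apply_eq_or_eq_bot_and_eq_top bot_le).resolve_right fun h => hm.ne h.2

theorem exists_apply_eq_top_of_bot_lt {m : ι → Bool} (hm : ⊥ < m) :
    ∃ i, m i = (⊤ : ι → Bool) i :=
  (exists_apply_eq_or_eq_bot_and_eq_top le_top).resolve_right fun h => hm.ne' h.1

theorem exists_between_of_not_exists_apply_eq [Nontrivial ι] {a b : ι → Bool} (hab : a ≤ b)
    (h : ¬∃ i, a i = b i) : ∃ m, a < m ∧ m < b ∧ (∃ i, a i = m i) ∧ ∃ i, m i = b i := by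
  classical
  obtain ⟨rfl, rfl⟩ := (exists_apply_eq_or_eq_bot_and_eq_top hab).resolve_left h
  obtain ⟨i, j, hij⟩ := exists_pair_ne ι
  have hbot : ⊥ < Function.update (⊥ : ι → Bool) i ⊤ :=
    bot_lt_iff_ne_bot.2 fun h => absurd (congrFun h i) (by simp)
  have htop : Function.update (⊥ : ι → Bool) i ⊤ < ⊤ :=
    lt_top_iff_ne_top.2 fun h => absurd (congrFun h j) (by simp [hij.symm])
  exact ⟨_, hbot, htop, exists_bot_apply_eq_of_lt_top htop, exists_apply_eq_top_of_bot_lt hbot⟩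

theorem Ioo_bot_top_constant [Fintype ι] (hι : 3 ≤ Fintype.card ι) {X : Sort*}
    (F : Set.Ioo (⊥ : ι → Bool) ⊤ → X) (hF : ∀ m m', m ≤ m' → F m = F m')
    (m m' : Set.Ioo (⊥ : ι → Bool) ⊤) : F m = F m' := by
  classical
  let single (k : ι) : ι → Bool := Function.update ⊥ k ⊤
  have sup_mem (k l : ι) : single k ⊔ single l ∈ Set.Ioo ⊥ ⊤ := by
    obtain ⟨e, -, he⟩ := Finset.exists_mem_notMem_of_card_lt_card
      (s := {k, l}) (t := Finset.univ) (Finset.card_le_two.trans_lt (by simp; omega))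
    simp only [Finset.mem_insert, Finset.mem_singleton, not_or] at he
    refine ⟨bot_lt_iff_ne_bot.2 fun h => ?_, lt_top_iff_ne_top.2 fun h => ?_⟩
    · exact absurd (congrFun h k) (by simp [single])
    · exact absurd (congrFun h e) (by simp [single, he])
  have single_mem (k : ι) : single k ∈ Set.Ioo ⊥ ⊤ := by simpa using sup_mem k k
  have eq_single (m : Set.Ioo (⊥ : ι → Bool) ⊤) (k : ι) (hk : m.1 k = true) :
      F m = F ⟨single k, single_mem k⟩ :=
    (hF _ _ (Subtype.mk_le_mk.2 (update_le_iff.2 ⟨hk.ge, fun _ _ => bot_le⟩))).symm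
  have single_eq (k l : ι) : F ⟨single k, single_mem k⟩ = F ⟨single l, single_mem l⟩ :=
    (hF _ ⟨_, sup_mem k l⟩ (Subtype.mk_le_mk.2 le_sup_left)).trans
      (hF _ _ (Subtype.mk_le_mk.2 le_sup_right)).symm
  obtain ⟨k, hk⟩ := exists_apply_eq_top_of_bot_lt m.2.1
  obtain ⟨l, hl⟩ := exists_apply_eq_top_of_bot_lt m'.2.1
  rw [eq_single m k hk, eq_single m' l hl, single_eq]

end BoolCube

theorem FlowHom.ext_heq {X Y : GFlow} {f g : FlowHom X Y} (h0 : f.f0 = g.f0)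
    (hP : ∀ a b (x : X.paths a b), f.fP x ≍ g.fP x) : f = g := by
  obtain ⟨f0, fP, _, _⟩ := f
  obtain ⟨g0, gP, _, _⟩ := g
  subst h0
  obtain rfl : @fP = @gP := by
    funext a b x
    exact eq_of_heq (hP a b x)
  rfl

theorem FlowHom.fP_heq_fP_cubeFlow {m : ℕ} {Z : GFlow} {F G : FlowHom (cubeFlow m) Z}
    (hFG : F = G) {a b a' b' : Fin m → Bool} (ha : a = a') (hb : b = b')
    (p : (cubeFlow m).paths a b) (q : (cubeFlow m).paths a' b') : F.fP p ≍ G.fP q := by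
  subst hFG ha hb
  cases p
  cases q
  rfl

theorem GFlow.comp_heq_comp (Z : GFlow) {u v w u' v' w' : Z.states}
    (hu : u = u') (hv : v = v') (hw : w = w') {p : Z.paths u v} {q : Z.paths v w}
    {p' : Z.paths u' v'} {q' : Z.paths v' w'} (hp : p ≍ p') (hq : q ≍ q') :
    Z.comp p q ≍ Z.comp p' q' := by
  subst hu hv hw
  rw [eq_of_heq hp, eq_of_heq hq]

namespace FlowHom

variable {N : ℕ} {Z : GFlow} {f g : FlowHom (cubeFlow (N + 2)) Z}

theorem ext_of_heq_of_exists_apply_eq (h0 : f.f0 = g.f0)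
    (hP : ∀ a b (hab : a < b), (∃ i, a i = b i) → f.fP ⟨hab⟩ ≍ g.fP ⟨hab⟩) : f = g := by
  refine ext_heq h0 fun (a b : Fin (N + 2) → Bool) ⟨hab⟩ => ?_
  by_cases hs : ∃ i, a i = b i
  · exact hP a b hab hs
  obtain ⟨m, ham, hmb, ham', hmb'⟩ := exists_between_of_not_exists_apply_eq hab.le hs
  exact heq_of_eq_of_heq (f.fP_comp (⟨ham⟩ : PLift (a < m)) (⟨hmb⟩ : PLift (m < b))) <|
    heq_of_heq_of_eq (Z.comp_heq_comp (congrFun h0 a) (congrFun h0 m) (congrFun h0 b)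
      (hP a m ham ham') (hP m b hmb hmb')) (g.fP_comp _ _).symm

theorem ext_of_cofaceFlow_comp (h : ∀ i α, (cofaceFlow i α).comp f = (cofaceFlow i α).comp g) :
    f = g := by
  refine ext_of_heq_of_exists_apply_eq (funext fun a => ?_) fun a b hab ⟨i, hi⟩ => ?_
  · rw [← Fin.insertNth_self_removeNth 0 a]
    exact congrFun (congrArg f0 (h 0 (a 0))) (Fin.removeNth 0 a)
  have ha := Fin.insertNth_self_removeNth i a
  have hb : Fin.insertNth i (a i) (Fin.removeNth i b) = b := by
    rw [hi, Fin.insertNth_self_removeNth]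
  let p : (cubeFlow (N + 1)).paths _ _ := ⟨Fin.removeNth_lt_removeNth hab i hi⟩
  exact (fP_heq_fP_cubeFlow rfl ha.symm hb.symm _ ((cofaceFlow i (a i)).fP p)).trans <|
    (fP_heq_fP_cubeFlow (h i (a i)) rfl rfl p p).trans (fP_heq_fP_cubeFlow rfl ha hb _ _)

end FlowHom

section BoundaryCocone

variable {n : ℕ} {Z : GFlow}
  (φ : ∀ (r : ℕ) (f : (Fin r → Bool) → (Fin (n + 3) → Bool)),
    IsCubeMap f → r < n + 3 → FlowHom (cubeFlow r) Z)

def IsBoundaryCocone : Prop :=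
  ∀ (r s : ℕ) (f : (Fin r → Bool) → (Fin (n + 3) → Bool))
    (g : (Fin s → Bool) → (Fin r → Bool)) (hf : IsCubeMap f) (hg : IsCubeMap g)
    (hr : r < n + 3) (hs : s < n + 3),
    φ s (f ∘ g) (hf.comp hg) hs = (cubeFlowHom g hg).comp (φ r f hf hr)

-- A state is the image of the point of the `0`-cube, so no facet has to be chosen for it.
def gluedState (a : Fin (n + 3) → Bool) : Z.states :=
  (φ 0 (fun _ => a) (IsCubeMap.const a) (by omega)).f0 ![]

def faceHom (i : Fin (n + 3)) (α : Bool) : FlowHom (cubeFlow (n + 2)) Z :=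
  φ (n + 2) (Fin.insertNth (α := fun _ => Bool) i α) (IsCubeMap.insertNth i α) (by omega)

namespace IsBoundaryCocone

variable {φ}

theorem f0_eq_gluedState (hφ : IsBoundaryCocone φ) {r : ℕ}
    {f : (Fin r → Bool) → (Fin (n + 3) → Bool)} (hf : IsCubeMap f) (hr : r < n + 3)
    (x : Fin r → Bool) :
    (φ r f hf hr).f0 x = gluedState φ (f x) :=
  (congrArg (fun F => F.f0 ![]) (hφ r 0 f (fun _ => x) hf (.const x) hr (by omega))).symm

theorem faceHom_f0_removeNth (hφ : IsBoundaryCocone φ) (i : Fin (n + 3)) {α : Bool}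
    {c : Fin (n + 3) → Bool} (hc : c i = α) :
    (faceHom φ i α).f0 (Fin.removeNth i c) = gluedState φ c := by
  rw [faceHom, hφ.f0_eq_gluedState, ← hc, Fin.insertNth_self_removeNth]

theorem faceHom_comp_swap (hφ : IsBoundaryCocone φ) (i : Fin (n + 3)) (j : Fin (n + 2))
    (α β : Bool) :
    (cubeFlowHom _ (.insertNth j β)).comp (faceHom φ i α) =
      (cubeFlowHom _ (.insertNth (j.predAbove i) α)).comp (faceHom φ (i.succAbove j) β) := by
  rw [faceHom, faceHom, ← hφ _ _ _ _ _ _ _ (by omega : n + 1 < n + 3),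
    ← hφ _ _ _ _ _ _ _ (by omega : n + 1 < n + 3)]
  congr 1
  exact funext (Fin.insertNth_insertNth_swap i j α β)

theorem faceHom_fP_heq (hφ : IsBoundaryCocone φ) {i k : Fin (n + 3)} {α β : Bool}
    {a b a' b' : Fin (n + 2) → Bool}
    (ha : (Fin.insertNth i α a : Fin (n + 3) → Bool) = Fin.insertNth k β a')
    (hb : (Fin.insertNth i α b : Fin (n + 3) → Bool) = Fin.insertNth k β b')
    (p : (cubeFlow (n + 2)).paths a b) (q : (cubeFlow (n + 2)).paths a' b') :
    (faceHom φ i α).fP p ≍ (faceHom φ k β).fP q := by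
  obtain rfl | hik := eq_or_ne i k
  · have hαβ : α = β := by simpa using congrFun ha i
    subst hαβ
    exact FlowHom.fP_heq_fP_cubeFlow rfl (by simpa using congrArg (Fin.removeNth i) ha)
      (by simpa using congrArg (Fin.removeNth i) hb) p q
  obtain ⟨j, rfl⟩ := Fin.exists_succAbove_eq hik.symm
  have hcommon {c c' : Fin (n + 2) → Bool}
      (h : (Fin.insertNth i α c : Fin (n + 3) → Bool) = Fin.insertNth (i.succAbove j) β c') :
      c j = β ∧ c' = Fin.insertNth (j.predAbove i) α (Fin.removeNth j c) := by
    have hc : c j = β := by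
      simpa [Fin.insertNth_apply_succAbove] using congrFun h (i.succAbove j)
    refine ⟨hc, ?_⟩
    rw [← Fin.insertNth_self_removeNth j c, hc, Fin.insertNth_insertNth_swap] at h
    simpa using (congrArg (Fin.removeNth (i.succAbove j)) h).symm
  obtain ⟨haj, rfl⟩ := hcommon ha
  obtain ⟨hbj, rfl⟩ := hcommon hb
  have hab := Fin.removeNth_lt_removeNth p.down j (haj.trans hbj.symm)
  let u_lt_v : (cubeFlow (n + 1)).paths (Fin.removeNth j a) (Fin.removeNth j b) := ⟨hab⟩
  have h₁ := FlowHom.fP_heq_fP_cubeFlow (F := faceHom φ i α) rfl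
    (by rw [← haj]; exact (Fin.insertNth_self_removeNth j a).symm)
    (by rw [← hbj]; exact (Fin.insertNth_self_removeNth j b).symm)
    p ((cubeFlowHom _ (.insertNth j β)).fP u_lt_v)
  have h₂ := FlowHom.fP_heq_fP_cubeFlow (hφ.faceHom_comp_swap i j α β) rfl rfl u_lt_v u_lt_v
  have h₃ := FlowHom.fP_heq_fP_cubeFlow (F := faceHom φ (i.succAbove j) β) rfl rfl rfl
    ((cubeFlowHom _ (.insertNth (j.predAbove i) α)).fP u_lt_v) q
  exact h₁.trans (h₂.trans h₃)

noncomputable def facePath (hφ : IsBoundaryCocone φ) {a b : Fin (n + 3) → Bool} (hab : a < b)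
    (h : ∃ i, a i = b i) : Z.paths (gluedState φ a) (gluedState φ b) :=
  cast (congrArg₂ Z.paths (hφ.faceHom_f0_removeNth h.choose rfl)
      (hφ.faceHom_f0_removeNth h.choose h.choose_spec.symm))
    ((faceHom φ h.choose (a h.choose)).fP ⟨Fin.removeNth_lt_removeNth hab _ h.choose_spec⟩)

theorem facePath_heq (hφ : IsBoundaryCocone φ) {a b : Fin (n + 3) → Bool} (hab : a < b)
    (h : ∃ i, a i = b i) {k : Fin (n + 3)} {β : Bool} {a' b' : Fin (n + 2) → Bool}
    (ha : Fin.insertNth k β a' = a) (hb : Fin.insertNth k β b' = b)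
    (q : (cubeFlow (n + 2)).paths a' b') : hφ.facePath hab h ≍ (faceHom φ k β).fP q :=
  (cast_heq _ _).trans <| hφ.faceHom_fP_heq (by rw [Fin.insertNth_self_removeNth, ha])
    (by rw [h.choose_spec, Fin.insertNth_self_removeNth, hb]) _ q

theorem facePath_trans (hφ : IsBoundaryCocone φ) {a b c : Fin (n + 3) → Bool} (hab : a < b)
    (hbc : b < c) (i : Fin (n + 3)) (hab_i : a i = b i) (hbc_i : b i = c i) :
    hφ.facePath (hab.trans hbc) ⟨i, hab_i.trans hbc_i⟩ =
      Z.comp (hφ.facePath hab ⟨i, hab_i⟩) (hφ.facePath hbc ⟨i, hbc_i⟩) := by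
  have hb : Fin.insertNth i (a i) (Fin.removeNth i b) = b := by
    rw [hab_i, Fin.insertNth_self_removeNth]
  have hc : Fin.insertNth i (a i) (Fin.removeNth i c) = c := by
    rw [hab_i, hbc_i, Fin.insertNth_self_removeNth]
  let F := faceHom φ i (a i)
  have hab' := Fin.removeNth_lt_removeNth hab i hab_i
  have hbc' := Fin.removeNth_lt_removeNth hbc i hbc_i
  refine eq_of_heq <| (hφ.facePath_heq _ _ (Fin.insertNth_self_removeNth i a) hc
    (⟨hab'.trans hbc'⟩ : PLift _)).trans <| heq_of_eq_of_heq (F.fP_comp ⟨hab'⟩ ⟨hbc'⟩) ?_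
  exact Z.comp_heq_comp (hφ.faceHom_f0_removeNth i rfl) (hφ.faceHom_f0_removeNth i hab_i.symm)
    (hφ.faceHom_f0_removeNth i (hab_i.trans hbc_i).symm)
    (hφ.facePath_heq _ _ (Fin.insertNth_self_removeNth i a) hb _).symm
    (hφ.facePath_heq _ _ hb hc _).symm

noncomputable def gluedPath (hφ : IsBoundaryCocone φ) {a b : Fin (n + 3) → Bool}
    (hab : a < b) : Z.paths (gluedState φ a) (gluedState φ b) :=
  if h : ∃ i, a i = b i then hφ.facePath hab h
  else
    let hm := exists_between_of_not_exists_apply_eq hab.le h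
    Z.comp (hφ.facePath hm.choose_spec.1 hm.choose_spec.2.2.1)
      (hφ.facePath hm.choose_spec.2.1 hm.choose_spec.2.2.2)

theorem gluedPath_eq_facePath (hφ : IsBoundaryCocone φ) {a b : Fin (n + 3) → Bool}
    (hab : a < b) (h : ∃ i, a i = b i) : hφ.gluedPath hab = hφ.facePath hab h :=
  dif_pos h

theorem gluedPath_heq (hφ : IsBoundaryCocone φ) {a b : Fin (n + 3) → Bool} (hab : a < b)
    {k : Fin (n + 3)} {β : Bool} {a' b' : Fin (n + 2) → Bool}
    (ha : Fin.insertNth k β a' = a) (hb : Fin.insertNth k β b' = b)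
    (q : (cubeFlow (n + 2)).paths a' b') : hφ.gluedPath hab ≍ (faceHom φ k β).fP q := by
  rw [hφ.gluedPath_eq_facePath hab ⟨k, by simp [← ha, ← hb]⟩]
  exact hφ.facePath_heq hab _ ha hb q

theorem gluedPath_trans_of_apply_eq (hφ : IsBoundaryCocone φ) {a b c : Fin (n + 3) → Bool}
    (hab : a < b) (hbc : b < c) (i : Fin (n + 3)) (hi : a i = c i) :
    hφ.gluedPath (hab.trans hbc) = Z.comp (hφ.gluedPath hab) (hφ.gluedPath hbc) := by
  have hbi : b i = c i := le_antisymm (hbc.le i) (hi ▸ hab.le i)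
  rw [hφ.gluedPath_eq_facePath _ ⟨i, hi⟩, hφ.gluedPath_eq_facePath _ ⟨i, hi.trans hbi.symm⟩,
    hφ.gluedPath_eq_facePath _ ⟨i, hbi⟩]
  exact hφ.facePath_trans hab hbc i (hi.trans hbi.symm) hbi

noncomputable def pathVia (hφ : IsBoundaryCocone φ) (m : Set.Ioo (⊥ : Fin (n + 3) → Bool) ⊤) :
    Z.paths (gluedState φ ⊥) (gluedState φ ⊤) :=
  Z.comp (hφ.gluedPath m.2.1) (hφ.gluedPath m.2.2)

theorem pathVia_eq_of_le (hφ : IsBoundaryCocone φ) {m m' : Set.Ioo (⊥ : Fin (n + 3) → Bool) ⊤}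
    (h : m ≤ m') : hφ.pathVia m = hφ.pathVia m' := by
  obtain rfl | hlt := eq_or_lt_of_le h
  · rfl
  obtain ⟨i, hi⟩ := exists_apply_eq_top_of_bot_lt m.2.1
  obtain ⟨j, hj⟩ := exists_bot_apply_eq_of_lt_top m'.2.2
  calc hφ.pathVia m
      = Z.comp (hφ.gluedPath m.2.1) (Z.comp (hφ.gluedPath hlt) (hφ.gluedPath m'.2.2)) :=
        congrArg _ (hφ.gluedPath_trans_of_apply_eq hlt m'.2.2 i hi)
    _ = Z.comp (Z.comp (hφ.gluedPath m.2.1) (hφ.gluedPath hlt)) (hφ.gluedPath m'.2.2) :=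
        (Z.comp_assoc _ _ _).symm
    _ = hφ.pathVia m' :=
        congrArg (Z.comp · _) (hφ.gluedPath_trans_of_apply_eq m.2.1 hlt j hj).symm

theorem gluedPath_trans (hφ : IsBoundaryCocone φ) {a b c : Fin (n + 3) → Bool} (hab : a < b)
    (hbc : b < c) :
    hφ.gluedPath (hab.trans hbc) = Z.comp (hφ.gluedPath hab) (hφ.gluedPath hbc) := by
  by_cases hac : ∃ i, a i = c i
  · obtain ⟨i, hi⟩ := hac
    exact hφ.gluedPath_trans_of_apply_eq hab hbc i hi
  obtain ⟨rfl, rfl⟩ := (exists_apply_eq_or_eq_bot_and_eq_top (hab.trans hbc).le).resolve_left hac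
  have hm := exists_between_of_not_exists_apply_eq (hab.trans hbc).le hac
  calc hφ.gluedPath (hab.trans hbc)
      = hφ.pathVia ⟨hm.choose, hm.choose_spec.1, hm.choose_spec.2.1⟩ := by
        rw [pathVia, hφ.gluedPath_eq_facePath _ hm.choose_spec.2.2.1,
          hφ.gluedPath_eq_facePath _ hm.choose_spec.2.2.2]
        exact dif_neg hac
    _ = hφ.pathVia ⟨b, hab, hbc⟩ :=
        Ioo_bot_top_constant (by simp) _ (fun _ _ => hφ.pathVia_eq_of_le) _ _

noncomputable def gluedHom (hφ : IsBoundaryCocone φ) : FlowHom (cubeFlow (n + 3)) Z where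
  f0 := gluedState φ
  fP x := hφ.gluedPath x.down
  fP_cont _ _ := continuous_bot
  fP_comp x y := hφ.gluedPath_trans x.down y.down

theorem eq_comp_gluedHom (hφ : IsBoundaryCocone φ) {r : ℕ}
    {f : (Fin r → Bool) → (Fin (n + 3) → Bool)} (hf : IsCubeMap f) (hr : r < n + 3) :
    φ r f hf hr = (cubeFlowHom f hf).comp hφ.gluedHom := by
  cases hf with
  | id => exact absurd hr (lt_irrefl _)
  | comp_delta g i α hg =>
    refine (hφ (n + 2) r _ g (.insertNth i α) hg (by omega) hr).trans (FlowHom.ext_heq ?_ ?_)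
    · exact funext fun x => hφ.f0_eq_gluedState _ _ (g x)
    · exact fun _ _ _ => (hφ.gluedPath_heq _ rfl rfl _).symm

end IsBoundaryCocone

end BoundaryCocone

/-- The second conjunct encodes `|∂□[n]|_bad ≅ |□[n]|_bad`: with the morphisms `|f|` for the
proper cube maps `f` into `□[n]` as cocone, `{0̂<1̂}ⁿ` is a colimit of the cubes of `∂□[n]`. -/
theorem cube_bad_realization_boundary (n : ℕ) :
    (∀ (Z : GFlow) (f g : FlowHom (cubeFlow (n + 3)) Z),
      (∀ (i : Fin (n + 3)) (α : Bool),
        (cofaceFlow i α).comp f = (cofaceFlow i α).comp g) → f = g) ∧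
    (∀ (Z : GFlow)
      (φ : ∀ (r : ℕ) (f : (Fin r → Bool) → (Fin (n + 3) → Bool)),
        IsCubeMap f → r < n + 3 → FlowHom (cubeFlow r) Z),
      (∀ (r s : ℕ) (f : (Fin r → Bool) → (Fin (n + 3) → Bool))
        (g : (Fin s → Bool) → (Fin r → Bool)) (hf : IsCubeMap f) (hg : IsCubeMap g)
        (hr : r < n + 3) (hs : s < n + 3),
        φ s (f ∘ g) (hf.comp hg) hs = (cubeFlowHom g hg).comp (φ r f hf hr)) →
      ∃! h : FlowHom (cubeFlow (n + 3)) Z,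
        ∀ (r : ℕ) (f : (Fin r → Bool) → (Fin (n + 3) → Bool))
          (hf : IsCubeMap f) (hr : r < n + 3),
          φ r f hf hr = (cubeFlowHom f hf).comp h) := by
  refine ⟨fun Z f g h => FlowHom.ext_of_cofaceFlow_comp h, fun Z φ hφ => ?_⟩
  refine ⟨IsBoundaryCocone.gluedHom hφ,
    fun r f hf hr => IsBoundaryCocone.eq_comp_gluedHom hφ hf hr, fun h hh => ?_⟩
  exact FlowHom.ext_of_cofaceFlow_comp fun i α =>
    (hh _ _ (.insertNth i α) (by omega)).symm.trans
      (IsBoundaryCocone.eq_comp_gluedHom hφ _ _)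
end

section
/- For every precubical set K, the set of states of the geometric realization agrees with the 0-cubes: K₀ ≅ |K|_bad⁰, naturally in K. -/
/-- A precubical set: a family of sets of `n`-cubes together with face maps
`∂ᵢᵅ` satisfying the cubical relations. -/
structure PrecubSet where
  cube : ℕ → Type
  face : ∀ n, Fin (n + 1) → Bool → cube (n + 1) → cube n
  rel : ∀ (n : ℕ) (i j : Fin (n + 1)), i ≤ j → ∀ (α β : Bool) (x : cube (n + 2)),
    face n i α (face (n + 1) j.succ β x) = face n j β (face (n + 1) i.castSucc α x)

/-- `(X, c)` is a bad geometric realization `|K|_bad` of the precubical set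
`K`: `c` is a cocone (compatible with the face maps) from the diagram of the
cubes of `K` — each `n`-cube realized as the flow of the poset `{0̂<1̂}ⁿ` —
to the flow `X`, and this cocone is colimiting, i.e.
`X = colim_{□[n] → K} {0̂<1̂}ⁿ` in the category of flows. -/
def IsBadRealization (K : PrecubSet) (X : GFlow)
    (c : ∀ n, K.cube n → FlowHom (cubeFlow n) X) : Prop :=
  (∀ (n : ℕ) (i : Fin (n + 1)) (α : Bool) (x : K.cube (n + 1)),
    c n (K.face n i α x) = (cofaceFlow i α).comp (c (n + 1) x)) ∧
  (∀ (Z : GFlow) (d : ∀ n, K.cube n → FlowHom (cubeFlow n) Z),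
    (∀ (n : ℕ) (i : Fin (n + 1)) (α : Bool) (x : K.cube (n + 1)),
      d n (K.face n i α x) = (cofaceFlow i α).comp (d (n + 1) x)) →
    ∃! h : FlowHom X Z, ∀ (n : ℕ) (x : K.cube n), d n x = (c n x).comp h)

/-- The codiscrete flow on a set `S`: exactly one path between any ordered pair. -/
def codiscFlow (S : Type) : GFlow where
  states := S
  paths _ _ := PUnit
  top _ _ := ⊥
  comp _ _ := ⟨⟩
  comp_assoc := by intros; rfl
  comp_cont := by
    intro a b c
    exact @continuous_const _ _ _ ⊥ _

/-- Any set map induces a flow hom into the codiscrete flow. -/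
def codiscHom {X : GFlow} {S : Type} (f : X.states → S) : FlowHom X (codiscFlow S) where
  f0 := f
  fP := fun _ => ⟨⟩
  fP_cont := fun a b => @continuous_const _ _ (X.top a b) ⊥ _
  fP_comp := fun _ _ => rfl

theorem codisc_hom_ext {X : GFlow} {S : Type} {f g : FlowHom X (codiscFlow S)}
    (h : f.f0 = g.f0) : f = g := by
  cases f with
  | mk f0 fP c p =>
  cases g with
  | mk g0 gP c' p' =>
  cases h
  have : @fP = @gP := by
    funext a b x
    rfl
  cases this
  rfl

/-- The vertex (0-cube) of an `n`-cube at a corner `ε`. -/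
def vertex (K : PrecubSet) : ∀ n, K.cube n → (Fin n → Bool) → K.cube 0
  | 0, x, _ => x
  | n + 1, x, ε => vertex K n (K.face n 0 (ε 0) x) (Fin.tail ε)

theorem tail_insertNth_succ {n : ℕ} (j : Fin (n + 1)) (α : Bool) (ε : Fin (n + 1) → Bool) :
    Fin.tail (Fin.insertNth (α := fun _ => Bool) j.succ α ε)
      = Fin.insertNth (α := fun _ => Bool) j α (Fin.tail ε) := by
  rw [Fin.eq_insertNth_iff]
  constructor
  · show Fin.insertNth (α := fun _ => Bool) j.succ α ε j.succ = α
    exact Fin.insertNth_apply_same _ _ _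
  · funext m
    show Fin.insertNth (α := fun _ => Bool) j.succ α ε (j.succAbove m).succ = ε m.succ
    rw [← Fin.succ_succAbove_succ, Fin.insertNth_apply_succAbove]

theorem insertNth_succ_zero {n : ℕ} (j : Fin (n + 1)) (α : Bool) (ε : Fin (n + 1) → Bool) :
    Fin.insertNth (α := fun _ => Bool) j.succ α ε 0 = ε 0 := by
  have h : (0 : Fin (n + 2)) = j.succ.succAbove 0 := (Fin.succ_succAbove_zero j).symm
  rw [h, Fin.insertNth_apply_succAbove]

theorem vertex_face (K : PrecubSet) : ∀ (n : ℕ) (i : Fin (n + 1)) (α : Bool)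
    (x : K.cube (n + 1)) (ε : Fin n → Bool),
    vertex K n (K.face n i α x) ε = vertex K (n + 1) x (Fin.insertNth i α ε) := by
  intro n
  induction n with
  | zero =>
      intro i α x ε
      fin_cases i
      show vertex K 0 (K.face 0 0 α x) ε = _
      show _ = vertex K 0 (K.face 0 0 (Fin.insertNth (α := fun _ => Bool) 0 α ε 0) x)
        (Fin.tail (Fin.insertNth (α := fun _ => Bool) 0 α ε))
      rw [Fin.insertNth_zero']
      rfl
  | succ n ih =>
      intro i α x ε
      rcases Fin.eq_zero_or_eq_succ i with hi | ⟨j, rfl⟩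
      · subst hi
        show vertex K n (K.face n 0 (ε 0) (K.face (n+1) 0 α x)) (Fin.tail ε) = _
        show _ = vertex K (n+1) (K.face (n+1) 0 (Fin.insertNth (α := fun _ => Bool) 0 α ε 0) x)
          (Fin.tail (Fin.insertNth (α := fun _ => Bool) 0 α ε))
        rw [Fin.insertNth_zero', Fin.cons_zero, Fin.tail_cons]
        rfl
      · show vertex K n (K.face n 0 (ε 0) (K.face (n+1) j.succ α x)) (Fin.tail ε) = _
        show _ = vertex K (n+1)
          (K.face (n+1) 0 (Fin.insertNth (α := fun _ => Bool) j.succ α ε 0) x)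
          (Fin.tail (Fin.insertNth (α := fun _ => Bool) j.succ α ε))
        rw [insertNth_succ_zero, tail_insertNth_succ, ← ih]
        show _ = vertex K n (K.face n j α (K.face (n+1) 0 (ε 0) x)) (Fin.tail ε)
        have hrel := K.rel n 0 j (Fin.zero_le j) (ε 0) α x
        rw [show (Fin.castSucc (0 : Fin (n+1))) = (0 : Fin (n+2)) from rfl] at hrel
        rw [hrel]

theorem vertex_c_eq (K : PrecubSet) (X : GFlow)
    (c : ∀ n, K.cube n → FlowHom (cubeFlow n) X)
    (hc1 : ∀ (n : ℕ) (i : Fin (n + 1)) (α : Bool) (x : K.cube (n + 1)),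
      c n (K.face n i α x) = (cofaceFlow i α).comp (c (n + 1) x)) :
    ∀ (n : ℕ) (x : K.cube n) (ε : Fin n → Bool),
      (c n x).f0 ε = (c 0 (vertex K n x ε)).f0 (fun i => i.elim0) := by
  intro n
  induction n with
  | zero =>
      intro x ε
      congr 1
      funext i
      exact i.elim0
  | succ n ih =>
      intro x ε
      have h := congrArg FlowHom.f0 (hc1 n 0 (ε 0) x)
      have h2 := congrFun h (Fin.tail ε)
      show (c (n+1) x).f0 ε = (c 0 (vertex K n (K.face n 0 (ε 0) x) (Fin.tail ε))).f0 _
      rw [← ih, h2]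
      show (c (n+1) x).f0 ε
        = (c (n+1) x).f0 (Fin.insertNth (α := fun _ => Bool) 0 (ε 0) (Fin.tail ε))
      rw [Fin.insertNth_zero', Fin.cons_self_tail]

/-- For every precubical set `K`, the set of states of the bad geometric
realization `|K|_bad = colim_{□[n]→K} {0̂<1̂}ⁿ` agrees with the set of
`0`-cubes: the canonical map `K₀ → |K|_bad⁰` (sending a `0`-cube to the image
of the unique state of `{0̂<1̂}⁰` under its cocone leg) is a bijection. -/
theorem badRealization_states (K : PrecubSet) (X : GFlow)
    (c : ∀ n, K.cube n → FlowHom (cubeFlow n) X) (hc : IsBadRealization K X c) :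
    Function.Bijective (fun x : K.cube 0 => (c 0 x).f0 (fun i => i.elim0)) := by
  obtain ⟨hc1, hc2⟩ := hc
  set φ := fun x : K.cube 0 => (c 0 x).f0 (fun i => i.elim0) with hφ
  -- the cocone on the codiscrete flow over the 0-cubes
  have hdcompat : ∀ (S : Type) (v : ∀ n, K.cube n → (Fin n → Bool) → S),
      (∀ (n : ℕ) (i : Fin (n + 1)) (α : Bool) (x : K.cube (n + 1)) (ε : Fin n → Bool),
        v n (K.face n i α x) ε = v (n + 1) x (Fin.insertNth i α ε)) →
      ∀ (n : ℕ) (i : Fin (n + 1)) (α : Bool) (x : K.cube (n + 1)),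
        codiscHom (v n (K.face n i α x))
          = (cofaceFlow i α).comp (codiscHom (v (n + 1) x)) := by
    intro S v hv n i α x
    apply codisc_hom_ext
    funext ε
    exact hv n i α x ε
  have hinj : Function.Injective φ := by
    obtain ⟨h, hh, -⟩ := hc2 (codiscFlow (K.cube 0))
      (fun n x => codiscHom (vertex K n x))
      (hdcompat (K.cube 0) (fun n x => vertex K n x) (vertex_face K))
    have hsec : ∀ x : K.cube 0, h.f0 (φ x) = x := by
      intro x
      have := congrFun (congrArg FlowHom.f0 (hh 0 x)) (fun i => i.elim0)
      exact this.symm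
    intro a b hab
    rw [← hsec a, ← hsec b, hab]
  have hsurj : Function.Surjective φ := by
    obtain ⟨h, hh, hun⟩ := hc2 (codiscFlow Prop)
      (fun n x => codiscHom (fun _ => True))
      (hdcompat Prop (fun n x _ => True) (fun _ _ _ _ _ => rfl))
    have h1 : codiscHom (X := X) (fun _ => True) = h := by
      apply hun
      intro n x
      apply codisc_hom_ext
      rfl
    have h2 : codiscHom (X := X) (fun s => ∃ y, φ y = s) = h := by
      apply hun
      intro n x
      apply codisc_hom_ext
      funext ε
      show True = ∃ y, φ y = (c n x).f0 ε
      have := vertex_c_eq K X c hc1 n x ε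
      exact (eq_true ⟨vertex K n x ε, this.symm⟩).symm
    intro s
    have h3 : True = (∃ y, φ y = s) := congrFun (congrArg FlowHom.f0 (h1.trans h2.symm)) s
    exact h3 ▸ trivial
  exact ⟨hinj, hsurj⟩
end

section
/- For every precubical set K, the path space P(|K|_bad) of the flow |K|_bad is a discrete topological space. -/
/-!
Let `Xᵈ` be `X` with every path space made discrete. Since the path spaces of the cubes
`{0̂<1̂}ⁿ` are discrete, the colimiting cocone into `X` is also a cocone into `Xᵈ`, so the
universal property yields `h : X → Xᵈ`, and by uniqueness of maps out of the colimit, `h`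
followed by the identity-carried map `Xᵈ → X` is the identity of `X`. Hence each map of path
spaces of `h` is a continuous injection into a discrete space.
-/

namespace GFlow

def discretization (X : GFlow) : GFlow where
  states := X.states
  paths := X.paths
  top _ _ := ⊥
  comp := X.comp
  comp_assoc := X.comp_assoc
  comp_cont a b c := by
    let _ : TopologicalSpace (X.paths a b) := ⊥
    let _ : TopologicalSpace (X.paths b c) := ⊥
    let _ : TopologicalSpace (X.paths a c) := ⊥
    have : DiscreteTopology (X.paths a b) := ⟨rfl⟩
    have : DiscreteTopology (X.paths b c) := ⟨rfl⟩
    exact continuous_of_discreteTopology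

def ofDiscretization (X : GFlow) : FlowHom X.discretization X where
  f0 a := a
  fP x := x
  fP_cont _ _ := continuous_bot
  fP_comp _ _ := rfl

end GFlow

namespace FlowHom

protected def id (X : GFlow) : FlowHom X X where
  f0 a := a
  fP x := x
  fP_cont a b := @continuous_id _ (X.top a b)
  fP_comp _ _ := rfl

theorem comp_id {X Y : GFlow} (f : FlowHom X Y) : f.comp (FlowHom.id Y) = f :=
  rfl

theorem comp_assoc {W X Y Z : GFlow} (f : FlowHom W X) (g : FlowHom X Y) (k : FlowHom Y Z) :
    (f.comp g).comp k = f.comp (g.comp k) :=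
  rfl

def toDiscretization {Y X : GFlow} (f : FlowHom Y X)
    (hY : ∀ a b, @DiscreteTopology (Y.paths a b) (Y.top a b)) :
    FlowHom Y X.discretization where
  f0 := f.f0
  fP := f.fP
  fP_cont a b := @continuous_of_discreteTopology _ (Y.top a b) (hY a b) _ ⊥ _
  fP_comp := f.fP_comp

theorem toDiscretization_comp_ofDiscretization {Y X : GFlow} (f : FlowHom Y X)
    (hY : ∀ a b, @DiscreteTopology (Y.paths a b) (Y.top a b)) :
    (f.toDiscretization hY).comp X.ofDiscretization = f :=
  rfl

theorem comp_toDiscretization {W Y X : GFlow} (f : FlowHom W Y) (g : FlowHom Y X)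
    (hW : ∀ a b, @DiscreteTopology (W.paths a b) (W.top a b))
    (hY : ∀ a b, @DiscreteTopology (Y.paths a b) (Y.top a b)) :
    (f.comp g).toDiscretization hW = f.comp (g.toDiscretization hY) :=
  rfl

theorem fP_heq_of_comp_eq_id {X Y : GFlow} {f : FlowHom X Y} {g : FlowHom Y X}
    (hfg : f.comp g = FlowHom.id X) {a b : X.states} (x : X.paths a b) :
    HEq (g.fP (f.fP x)) x := by
  have key : ∀ k : FlowHom X X, k = FlowHom.id X → HEq (k.fP x) x := by
    rintro k rfl
    rfl
  exact key _ hfg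

theorem fP_injective_of_comp_eq_id {X Y : GFlow} {f : FlowHom X Y} {g : FlowHom Y X}
    (hfg : f.comp g = FlowHom.id X) (a b : X.states) :
    Function.Injective (fun x : X.paths a b => f.fP x) := by
  intro x y hxy
  have hgf : g.fP (f.fP x) = g.fP (f.fP y) := congrArg g.fP hxy
  exact eq_of_heq ((fP_heq_of_comp_eq_id hfg x).symm.trans
    ((heq_of_eq hgf).trans (fP_heq_of_comp_eq_id hfg y)))

theorem discreteTopology_paths_of_comp_ofDiscretization_eq_id {X : GFlow}
    {f : FlowHom X X.discretization} (hf : f.comp X.ofDiscretization = FlowHom.id X)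
    (a b : X.states) : @DiscreteTopology (X.paths a b) (X.top a b) :=
  @DiscreteTopology.of_continuous_injective _ _ (X.top a b) (X.discretization.top _ _)
    (@DiscreteTopology.mk _ ⊥ rfl) _ (f.fP_cont a b) (fP_injective_of_comp_eq_id hf a b)

end FlowHom

theorem cubeFlow_discreteTopology (n : ℕ) (a b : (cubeFlow n).states) :
    @DiscreteTopology ((cubeFlow n).paths a b) ((cubeFlow n).top a b) :=
  @DiscreteTopology.mk _ ((cubeFlow n).top a b) rfl

namespace IsBadRealization

variable {K : PrecubSet} {X : GFlow} {c : ∀ n, K.cube n → FlowHom (cubeFlow n) X}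

theorem isCocone_comp (hc : IsBadRealization K X c) {Z : GFlow} (h : FlowHom X Z)
    (n : ℕ) (i : Fin (n + 1)) (α : Bool) (x : K.cube (n + 1)) :
    (c n (K.face n i α x)).comp h = (cofaceFlow i α).comp ((c (n + 1) x).comp h) := by
  rw [hc.1, FlowHom.comp_assoc]

theorem hom_ext (hc : IsBadRealization K X c) {Z : GFlow} {h h' : FlowHom X Z}
    (hhh' : ∀ n x, (c n x).comp h = (c n x).comp h') : h = h' :=
  (hc.2 Z (fun n x => (c n x).comp h) (hc.isCocone_comp h)).unique
    (fun _ _ => rfl) hhh'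

theorem exists_comp_ofDiscretization_eq_id (hc : IsBadRealization K X c) :
    ∃ h : FlowHom X X.discretization, h.comp X.ofDiscretization = FlowHom.id X := by
  have hcocone : ∀ (n : ℕ) (i : Fin (n + 1)) (α : Bool) (x : K.cube (n + 1)),
      (c n (K.face n i α x)).toDiscretization (cubeFlow_discreteTopology n) =
        (cofaceFlow i α).comp
          ((c (n + 1) x).toDiscretization (cubeFlow_discreteTopology (n + 1))) := by
    intro n i α x
    rw [hc.1]
    exact FlowHom.comp_toDiscretization _ _ _ _
  obtain ⟨h, hh, -⟩ := hc.2 X.discretization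
    (fun n x => (c n x).toDiscretization (cubeFlow_discreteTopology n)) hcocone
  refine ⟨h, hc.hom_ext fun n x => ?_⟩
  rw [← FlowHom.comp_assoc, ← hh, FlowHom.toDiscretization_comp_ofDiscretization,
    FlowHom.comp_id]

end IsBadRealization

/-- For every precubical set `K`, the path space `ℙ(|K|_bad)` of the flow
`|K|_bad = colim_{□[n]→K} {0̂<1̂}ⁿ` is a discrete topological space (each space
of non-constant execution paths is discrete). -/
theorem badRealization_paths_discrete (K : PrecubSet) (X : GFlow)
    (c : ∀ n, K.cube n → FlowHom (cubeFlow n) X) (hc : IsBadRealization K X c)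
    (a b : X.states) :
    @DiscreteTopology (X.paths a b) (X.top a b) := by
  obtain ⟨h, hid⟩ := hc.exists_comp_ofDiscretization_eq_id
  exact FlowHom.discreteTopology_paths_of_comp_ofDiscretization_eq_id hid a b
end
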